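/- arXiv:2401.09593 — 13 statements merged into one kernel-verified Lean document; each statement's English description precedes it below -/
import Mathlib

section
/- If |S| ≥ 2, then for any pattern p : S → A and any a ∈ A with a ≠ p(e), the minimal memory set of the cellular automaton τ_p^a equals S. -/
variable {G A : Type*}

def shift [Group G] (g : G) (x : G → A) : G → A := fun h => x (g⁻¹ * h)

def restrictPat (S : Finset G) (x : G → A) : S → A := fun s => x s

def muP [Group G] [DecidableEq A] (S : Finset G) (p : S → A) (a : A)
    (he : (1 : G) ∈ S) (z : S → A) : A :=
  if z = p then a else z ⟨1, he⟩

def tauP [Group G] [DecidableEq A] (S : Finset G) (p : S → A) (a : A)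
    (he : (1 : G) ∈ S) (x : G → A) : G → A :=
  fun g => muP S p a he (restrictPat S (shift g⁻¹ x))

def IsMemorySet [Group G] (τ : (G → A) → (G → A)) (T : Finset G) : Prop :=
  ∃ ν : (T → A) → A, ∀ (x : G → A) (g : G), τ x g = ν (restrictPat T (shift g⁻¹ x))

theorem tauP_minimal_memory_set [Group G] [Fintype A] [DecidableEq A]
    (hA : 2 ≤ Fintype.card A) (S : Finset G) (he : (1 : G) ∈ S)
    (hS : 2 ≤ S.card) (p : S → A) (a : A) (ha : a ≠ p ⟨1, he⟩) :
    IsMemorySet (tauP S p a he) S ∧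
      ∀ T : Finset G, IsMemorySet (tauP S p a he) T → S ⊆ T := by
  classical
  have hnt : Nontrivial A := Fintype.one_lt_card_iff_nontrivial.mp hA
  refine ⟨⟨muP S p a he, fun x g => rfl⟩, ?_⟩
  rintro T ⟨ν, hν⟩ s hsS
  by_contra hsT
  -- if two configurations agree on T, then τ at 1 agrees
  have key : ∀ x y : G → A, (∀ u : T, x (u : G) = y (u : G)) →
      tauP S p a he x 1 = tauP S p a he y 1 := by
    intro x y h
    rw [hν, hν]
    congr 1
    funext u
    simpa [restrictPat, shift] using h u
  have tau1 : ∀ x : G → A, tauP S p a he x 1 = muP S p a he (restrictPat S x) := by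
    intro x
    show muP S p a he (restrictPat S (shift 1⁻¹ x)) = _
    congr 1
    funext u
    simp [restrictPat, shift]
  by_cases hs1 : s = 1
  · -- s = 1 ∉ T
    subst hs1
    obtain ⟨t, htS, ht1⟩ := Finset.exists_mem_ne (show 1 < S.card by omega) (1 : G)
    obtain ⟨c, hc⟩ := exists_ne (p ⟨t, htS⟩)
    set base : G → A := fun h => if hm : h ∈ S then p ⟨h, hm⟩ else p ⟨1, he⟩ with hbase
    set x := Function.update base t c with hx
    set y := Function.update x 1 a with hy
    have hxy := key x y (fun u => by
      have : (u : G) ≠ 1 := by rintro h0; exact hsT (h0 ▸ u.2)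
      simp [hy, Function.update_of_ne this])
    have hxt : x t = c := Function.update_self _ _ _
    have hyt : y t = c := by rw [hy, Function.update_of_ne ht1, hxt]
    have hx1 : x 1 = p ⟨1, he⟩ := by
      rw [hx, Function.update_of_ne (Ne.symm ht1), hbase]
      simp [he]
    have hy1 : y 1 = a := Function.update_self _ _ _
    have hrx : restrictPat S x ≠ p := fun h => by
      have := congrFun h ⟨t, htS⟩
      rw [restrictPat] at this
      exact hc (hxt ▸ this)
    have hry : restrictPat S y ≠ p := fun h => by
      have := congrFun h ⟨t, htS⟩
      rw [restrictPat] at this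
      exact hc (hyt ▸ this)
    have h1 : tauP S p a he x 1 = p ⟨1, he⟩ := by
      rw [tau1, muP, if_neg hrx]
      exact hx1
    have h2 : tauP S p a he y 1 = a := by
      rw [tau1, muP, if_neg hry]
      exact hy1
    rw [h1, h2] at hxy
    exact ha hxy.symm
  · -- s ≠ 1, s ∉ T
    obtain ⟨b, hb⟩ := exists_ne (p ⟨s, hsS⟩)
    set x : G → A := fun h => if hm : h ∈ S then p ⟨h, hm⟩ else p ⟨1, he⟩ with hx
    set y := Function.update x s b with hy
    have hxy := key x y (fun u => by
      have : (u : G) ≠ s := by rintro h0; exact hsT (h0 ▸ u.2)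
      simp [hy, Function.update_of_ne this])
    have hrx : restrictPat S x = p := by
      funext u
      rw [restrictPat, hx]
      simp [u.2]
    have hys : y s = b := Function.update_self _ _ _
    have hry : restrictPat S y ≠ p := fun h => by
      have := congrFun h ⟨s, hsS⟩
      rw [restrictPat] at this
      exact hb (hys ▸ this)
    have hy1 : y 1 = p ⟨1, he⟩ := by
      rw [hy, Function.update_of_ne (Ne.symm hs1), hx]
      simp [he]
    have h1 : tauP S p a he x 1 = a := by
      rw [tau1, muP, if_pos hrx]
    have h2 : tauP S p a he y 1 = p ⟨1, he⟩ := by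
      rw [tau1, muP, if_neg hry]
      exact hy1
    rw [h1, h2] at hxy
    exact ha hxy
end

section
/- X_p ⊆ im(τ_p^a), and equality X_p = im(τ_p^a) holds if and only if τ_p^a is idempotent (τ_p^a ∘ τ_p^a = τ_p^a). -/
variable {G A : Type*}

def Xp [Group G] (S : Finset G) (p : S → A) : Set (G → A) :=
  {x | ∀ g : G, restrictPat S (shift g⁻¹ x) ≠ p}

theorem Xp_subset_image_and_eq_iff_idem [Group G] [Fintype A] [DecidableEq A]
    (hA : 2 ≤ Fintype.card A) (S : Finset G) (he : (1 : G) ∈ S)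
    (p : S → A) (a : A) (ha : a ≠ p ⟨1, he⟩) :
    Xp S p ⊆ Set.range (tauP S p a he) ∧
      (Xp S p = Set.range (tauP S p a he) ↔
        tauP S p a he ∘ tauP S p a he = tauP S p a he) := by
  have hfix : ∀ x ∈ Xp S p, tauP S p a he x = x := by
    intro x hx
    funext g
    simp only [tauP, muP, if_neg (hx g), restrictPat, shift, inv_inv, mul_one]
  have hsub : Xp S p ⊆ Set.range (tauP S p a he) := fun x hx => ⟨x, hfix x hx⟩
  refine ⟨hsub, ?_, ?_⟩
  · intro heq
    funext x g
    have hx : tauP S p a he x ∈ Xp S p := heq ▸ ⟨x, rfl⟩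
    simp only [Function.comp_apply, hfix _ hx]
  · intro hid
    refine Set.Subset.antisymm hsub ?_
    rintro y ⟨x, rfl⟩ g hg
    have h1 : tauP S p a he (tauP S p a he x) g = a := by
      simp only [tauP, muP, if_pos hg]
    have h2 : tauP S p a he x g = p ⟨1, he⟩ := by
      have := congrFun hg ⟨1, he⟩
      simpa [restrictPat, shift] using this
    have h3 : tauP S p a he (tauP S p a he x) g = tauP S p a he x g :=
      congrFun (congrFun hid x) g
    exact ha (by rw [← h1, h3, h2])
end

section
/- τ_p^a is not idempotent if and only if there exists x ∈ A^G such that μ_p^a((s⁻¹·x)|_S) = p(s) for all s ∈ S. -/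
variable {G A : Type*}

/-!
The only way `τ (τ x)` can differ from `τ x` at `g` is that the pattern `p` occurs in `τ x`
at `g`, for otherwise `τ` copies the value at `g`. Conversely, if `p` occurs in `τ x` at `g`,
then `τ (τ x) g = a`, while `τ x g = p 1 ≠ a`. By equivariance of `τ` the occurrence may be
moved to `g = 1`, and "`p` occurs in `τ x` at `1`" is exactly the condition on `x`.
-/

section Shift

variable [Group G]

@[simp]
lemma shift_one (x : G → A) : shift 1 x = x := by
  funext h
  simp [shift]

@[simp]
lemma shift_inv_apply (g h : G) (x : G → A) : shift g⁻¹ x h = x (g * h) := by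
  simp [shift]

end Shift

section Tau

variable [Group G] [DecidableEq A] (S : Finset G) (p : S → A) (a : A) (he : (1 : G) ∈ S)

lemma tauP_apply_of_restrictPat_ne {x : G → A} {g : G}
    (hx : restrictPat S (shift g⁻¹ x) ≠ p) : tauP S p a he x g = x g := by
  simp [tauP, muP, hx, restrictPat]

lemma tauP_apply_of_restrictPat_eq {x : G → A} {g : G}
    (hx : restrictPat S (shift g⁻¹ x) = p) : tauP S p a he x g = a := by
  simp [tauP, muP, hx]

lemma shift_tauP (g : G) (x : G → A) :
    shift g (tauP S p a he x) = tauP S p a he (shift g x) := by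
  funext h
  simp only [shift, tauP]
  congr 1
  funext s
  simp only [restrictPat, shift, mul_assoc, inv_inv]

lemma tauP_tauP_apply_ne_iff (ha : a ≠ p ⟨1, he⟩) (x : G → A) (g : G) :
    tauP S p a he (tauP S p a he x) g ≠ tauP S p a he x g ↔
      restrictPat S (shift g⁻¹ (tauP S p a he x)) = p := by
  refine ⟨fun hne => by_contra fun hp => hne (tauP_apply_of_restrictPat_ne S p a he hp), ?_⟩
  intro hp
  have hg : tauP S p a he x g = p ⟨1, he⟩ := by
    simpa [restrictPat] using congrFun hp ⟨1, he⟩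
  rw [tauP_apply_of_restrictPat_eq S p a he hp, hg]
  exact ha

lemma exists_restrictPat_shift_tauP_eq_iff :
    (∃ (x : G → A) (g : G), restrictPat S (shift g⁻¹ (tauP S p a he x)) = p) ↔
      ∃ x : G → A, restrictPat S (tauP S p a he x) = p := by
  constructor
  · rintro ⟨x, g, hx⟩
    exact ⟨shift g⁻¹ x, by rwa [← shift_tauP]⟩
  · rintro ⟨x, hx⟩
    exact ⟨x, 1, by simpa using hx⟩

end Tau

theorem not_idempotent_iff_general [Group G] [DecidableEq A]
    (S : Finset G) (he : (1 : G) ∈ S)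
    (p : S → A) (a : A) (ha : a ≠ p ⟨1, he⟩) :
    ¬ (tauP S p a he ∘ tauP S p a he = tauP S p a he) ↔
      ∃ x : G → A, ∀ s : S, muP S p a he (restrictPat S (shift (s : G)⁻¹ x)) = p s := by
  calc ¬ (tauP S p a he ∘ tauP S p a he = tauP S p a he)
      ↔ ∃ (x : G → A) (g : G), tauP S p a he (tauP S p a he x) g ≠ tauP S p a he x g := by
        simp only [funext_iff, Function.comp_apply, not_forall, ne_eq]
    _ ↔ ∃ (x : G → A) (g : G), restrictPat S (shift g⁻¹ (tauP S p a he x)) = p := by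
        simp only [tauP_tauP_apply_ne_iff S p a he ha]
    _ ↔ ∃ x : G → A, restrictPat S (tauP S p a he x) = p :=
        exists_restrictPat_shift_tauP_eq_iff S p a he
    _ ↔ _ := by simp only [funext_iff]; rfl

theorem not_idempotent_iff [Group G] [Fintype A] [DecidableEq A]
    (hA : 2 ≤ Fintype.card A) (S : Finset G) (he : (1 : G) ∈ S)
    (p : S → A) (a : A) (ha : a ≠ p ⟨1, he⟩) :
    ¬ (tauP S p a he ∘ tauP S p a he = tauP S p a he) ↔
      ∃ x : G → A, ∀ s : S, muP S p a he (restrictPat S (shift (s : G)⁻¹ x)) = p s :=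
  not_idempotent_iff_general S he p a ha
end

section
/- If x ∈ A^G satisfies μ_p^a((s⁻¹·x)|_S) = p(s) for all s ∈ S, then: (1) x|_S ≠ p; (2) x(e) = p(e); and (3) there exists t ∈ S with t ≠ e such that (t⁻¹·x)|_S = p. -/
variable {G A : Type*}

theorem witness_properties [Group G] [Fintype A] [DecidableEq A]
    (hA : 2 ≤ Fintype.card A) (S : Finset G) (he : (1 : G) ∈ S)
    (p : S → A) (a : A) (ha : a ≠ p ⟨1, he⟩) (x : G → A)
    (hx : ∀ s : S, muP S p a he (restrictPat S (shift (s : G)⁻¹ x)) = p s) :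
    restrictPat S x ≠ p ∧ x 1 = p ⟨1, he⟩ ∧
      ∃ t : S, (t : G) ≠ 1 ∧ restrictPat S (shift (t : G)⁻¹ x) = p := by
  have hshift1 : restrictPat S (shift ((⟨1, he⟩ : S) : G)⁻¹ x) = restrictPat S x := by
    funext s
    simp [restrictPat, shift]
  have h1 := hx ⟨1, he⟩
  rw [hshift1] at h1
  have hne : restrictPat S x ≠ p := by
    intro h
    rw [muP, if_pos h] at h1
    exact ha h1
  rw [muP, if_neg hne] at h1
  have hxe : x 1 = p ⟨1, he⟩ := by simpa [restrictPat] using h1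
  refine ⟨hne, hxe, ?_⟩
  by_contra hcon
  push_neg at hcon
  apply hne
  funext s
  by_cases hs1 : (s : G) = 1
  · have : s = ⟨1, he⟩ := Subtype.ext hs1
    rw [this]
    simpa [restrictPat] using hxe
  · have h2 := hx s
    have hnp := hcon s hs1
    rw [muP, if_neg hnp] at h2
    simpa [restrictPat, shift] using h2
end

section
/- If a ∈ A satisfies a ≠ p(s) for all s ∈ S (in particular a ≠ p(e)), then the cellular automaton τ_p^a is idempotent. -/
variable {G A : Type*}

theorem idempotent_of_a_notin_pattern [Group G] [Fintype A] [DecidableEq A]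
    (hA : 2 ≤ Fintype.card A) (S : Finset G) (he : (1 : G) ∈ S)
    (hS : 2 ≤ S.card) (p : S → A) (a : A) (ha : ∀ s : S, a ≠ p s) :
    tauP S p a he ∘ tauP S p a he = tauP S p a he := by
  funext x g
  simp only [Function.comp_apply]
  by_cases h : restrictPat S (shift g⁻¹ (tauP S p a he x)) = p
  · have hx : restrictPat S (shift g⁻¹ x) = p := by
      funext s
      have hs := congrFun h s
      simp only [restrictPat, shift, tauP, muP, inv_inv] at hs ⊢
      split_ifs at hs with h1
      · exact absurd hs (ha s)
      · simpa using hs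
    simp [tauP, muP, h, hx]
  · simp [tauP, muP, h, restrictPat, shift]
end

section
/- If p : S → A is a constant pattern (p(s) = p(e) for all s ∈ S), then for any a ∈ A with a ≠ p(e), the cellular automaton τ_p^a is idempotent. -/
variable {G A : Type*}

lemma tauP_apply [Group G] [DecidableEq A] (S : Finset G) (p : S → A) (a : A)
    (he : (1 : G) ∈ S) (x : G → A) (g : G) :
    tauP S p a he x g = if (fun s : S => x (g * s)) = p then a else x g := by
  have h : restrictPat S (shift g⁻¹ x) = fun s : S => x (g * s) := by
    funext s; simp [restrictPat, shift]
  simp [tauP, muP, h, mul_one]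

theorem idempotent_of_constant_pattern [Group G] [Fintype A] [DecidableEq A]
    (hA : 2 ≤ Fintype.card A) (S : Finset G) (he : (1 : G) ∈ S)
    (p : S → A) (hp : ∀ s : S, p s = p ⟨1, he⟩)
    (a : A) (ha : a ≠ p ⟨1, he⟩) :
    tauP S p a he ∘ tauP S p a he = tauP S p a he := by
  funext x g
  set y := tauP S p a he x with hy
  have key : (fun s : S => y (g * s)) ≠ p := by
    intro h
    have hc : ∀ s : S, y (g * s) = p ⟨1, he⟩ := by
      intro s
      have := congrFun h s
      simpa [hp s] using this
    have hyg : y g = p ⟨1, he⟩ := by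
      have := hc ⟨1, he⟩
      simpa using this
    rw [hy, tauP_apply] at hyg
    split_ifs at hyg with h1
    · exact ha hyg
    · apply h1
      funext s
      have := hc s
      rw [hy, tauP_apply] at this
      split_ifs at this with h2
      · exact absurd this ha
      · rw [hp s]; exact this
  calc (tauP S p a he ∘ tauP S p a he) x g
      = tauP S p a he y g := rfl
    _ = y g := by rw [tauP_apply, if_neg key]
end

section
/- For any finite subset S ⊆ G with e ∈ S, there exists an idempotent cellular automaton τ : A^G → A^G whose minimal memory set equals S. -/
variable {G A : Type*}

theorem exists_idempotent_with_minimal_memory_set [Group G] [Fintype A]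
    (hA : 2 ≤ Fintype.card A) (S : Finset G) (he : (1 : G) ∈ S) :
    ∃ τ : (G → A) → (G → A), τ ∘ τ = τ ∧ IsMemorySet τ S ∧
      ∀ T : Finset G, IsMemorySet τ T → S ⊆ T := by
  classical
  obtain ⟨a, b, hab⟩ : ∃ a b : A, a ≠ b := Fintype.one_lt_card_iff.mp (by omega)
  -- key: two configurations agreeing on a memory set give equal output at 1
  have key : ∀ (τ : (G → A) → (G → A)) (T : Finset G), IsMemorySet τ T →
      ∀ x x' : G → A, (∀ t ∈ T, x t = x' t) → τ x 1 = τ x' 1 := by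
    rintro τ T ⟨μ, hμ⟩ x x' hagree
    rw [hμ, hμ]
    congr 1
    funext t
    simp only [restrictPat, shift, inv_inv, one_mul]
    exact hagree t t.2
  by_cases hS : S = {1}
  · -- identity automaton
    refine ⟨id, rfl, ⟨fun p => p ⟨1, he⟩, ?_⟩, ?_⟩
    · intro x g
      simp [restrictPat, shift]
    · intro T hT s hs
      rw [hS] at hs
      simp only [Finset.mem_singleton] at hs
      subst hs
      by_contra h1
      have := key id T hT (fun _ => a) (Function.update (fun _ => a) 1 b)
        (fun t ht => by
          rw [Function.update_of_ne (by rintro rfl; exact h1 ht)])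
      simp [Function.update_self] at this
      exact hab this
  · -- S ≠ {1}, so there is s₁ ∈ S with s₁ ≠ 1
    obtain ⟨s₁, hs₁S, hs₁⟩ : ∃ s ∈ S, s ≠ 1 := by
      by_contra h
      push_neg at h
      apply hS
      apply Finset.ext
      intro g
      simp only [Finset.mem_singleton]
      exact ⟨fun hg => h g hg, fun hg => hg ▸ he⟩
    set ν : (S → A) → A := fun p => if ∀ s : S, p s = a then b else p ⟨1, he⟩ with hν
    set τ : (G → A) → (G → A) := fun x g => ν (fun s : S => x (g * s)) with hτ
    have hτ' : ∀ x g, τ x g = if ∀ s ∈ S, x (g * s) = a then b else x g := by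
      intro x g
      simp only [hτ, hν]
      congr 1
      · simp only [eq_iff_iff]
        constructor
        · intro h s hs; exact h ⟨s, hs⟩
        · intro h s; exact h s s.2
      · rw [mul_one]
    refine ⟨τ, ?_, ⟨ν, ?_⟩, ?_⟩
    · -- idempotent
      funext x g
      show τ (τ x) g = τ x g
      rw [hτ' (τ x) g]
      have : ¬ ∀ s ∈ S, τ x (g * s) = a := by
        intro h
        have h1 : τ x g = a := by simpa using h 1 he
        rw [hτ' x g] at h1
        by_cases hc : ∀ s ∈ S, x (g * s) = a
        · rw [if_pos hc] at h1; exact hab h1.symm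
        · push_neg at hc
          obtain ⟨s, hsS, hsa⟩ := hc
          have h2 := h s hsS
          rw [hτ' x (g * s)] at h2
          by_cases hc2 : ∀ t ∈ S, x (g * s * t) = a
          · rw [if_pos hc2] at h2; exact hab h2.symm
          · rw [if_neg hc2] at h2; exact hsa h2
      rw [if_neg this]
    · -- memory set S
      intro x g
      show ν _ = ν _
      congr 1
      funext s
      simp [restrictPat, shift]
    · -- minimality
      intro T hT s₀ hs₀
      by_contra hs₀T
      by_cases h1 : s₀ = 1
      · subst h1
        set x : G → A := Function.update (fun _ => a) s₁ b with hx
        set x' : G → A := Function.update x 1 b with hx'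
        have hxs₁ : x s₁ = b := by simp [hx]
        have hx's₁ : x' s₁ = b := by
          rw [hx', Function.update_of_ne hs₁, hxs₁]
        have hx1 : x 1 = a := by
          rw [hx, Function.update_of_ne (Ne.symm hs₁)]
        have hx'1 : x' 1 = b := by simp [hx']
        have hk := key τ T hT x x' (fun t ht => by
          rw [hx', Function.update_of_ne (by rintro rfl; exact hs₀T ht)])
        rw [hτ' x 1, hτ' x' 1] at hk
        rw [if_neg (by intro h; exact hab ((one_mul s₁ ▸ h s₁ hs₁S : x s₁ = a) ▸ hxs₁ ▸ rfl))] at hk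
        rw [if_neg (by intro h; have := h s₁ hs₁S; rw [one_mul, hx's₁] at this; exact hab this.symm)] at hk
        rw [hx1, hx'1] at hk
        exact hab hk
      · set x : G → A := fun _ => a with hx
        set x' : G → A := Function.update x s₀ b with hx'
        have hk := key τ T hT x x' (fun t ht => by
          rw [hx', Function.update_of_ne (by rintro rfl; exact hs₀T ht)])
        rw [hτ' x 1, hτ' x' 1] at hk
        rw [if_pos (fun s _ => rfl)] at hk
        rw [if_neg (by
          intro h
          have := h s₀ hs₀
          rw [one_mul, hx', Function.update_self] at this
          exact hab this.symm)] at hk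
        rw [hx', Function.update_of_ne (Ne.symm h1), hx] at hk
        exact hab hk.symm
end

section
/- If p : S → A is a symmetrical pattern (S = S⁻¹ and p(s) = p(s⁻¹) for all s ∈ S) and a ∈ A with a ≠ p(e), then τ_p^a is idempotent. -/
variable {G A : Type*}

theorem idempotent_of_symmetrical_pattern [Group G] [Fintype A] [DecidableEq A]
    (hA : 2 ≤ Fintype.card A) (S : Finset G) (he : (1 : G) ∈ S)
    (hSinv : ∀ s ∈ S, s⁻¹ ∈ S) (p : S → A)
    (hp : ∀ (s : G) (hs : s ∈ S), p ⟨s, hs⟩ = p ⟨s⁻¹, hSinv s hs⟩)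
    (a : A) (ha : a ≠ p ⟨1, he⟩) :
    tauP S p a he ∘ tauP S p a he = tauP S p a he := by
  funext x g
  simp only [Function.comp_apply]
  set y := tauP S p a he x with hy
  have hy' : restrictPat S (shift g⁻¹ y) ≠ p := by
    intro h
    have hval : ∀ (s : G) (hs : s ∈ S), y (g * s) = p ⟨s, hs⟩ := by
      intro s hs
      have := congrFun h ⟨s, hs⟩
      simpa [restrictPat, shift] using this
    have h1 : y g = p ⟨1, he⟩ := by simpa using hval 1 he
    have hxg : restrictPat S (shift g⁻¹ x) ≠ p := by
      intro hc
      have hya : y g = a := by simp [hy, tauP, muP, hc]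
      exact ha (hya ▸ h1)
    have hyg : y g = x g := by
      simp [hy, tauP, muP, hxg, restrictPat, shift]
    by_cases hex : ∃ s, ∃ hs : s ∈ S, restrictPat S (shift (g * s)⁻¹ x) = p
    · obtain ⟨s, hs, hps⟩ := hex
      have hps' : restrictPat S (shift (s⁻¹ * g⁻¹) x) = p := by
        rw [← mul_inv_rev]; exact hps
      have hygs : y (g * s) = a := by simp [hy, tauP, muP, hps']
      have h2 : x g = p ⟨s⁻¹, hSinv s hs⟩ := by
        have := congrFun hps ⟨s⁻¹, hSinv s hs⟩
        simpa [restrictPat, shift, mul_assoc] using this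
      have h3 : p ⟨s, hs⟩ = a := by rw [← hval s hs, hygs]
      apply ha
      rw [← h1, hyg, h2, ← hp s hs, h3]
    · push_neg at hex
      apply hxg
      funext s
      obtain ⟨s, hs⟩ := s
      have hex' : restrictPat S (shift (s⁻¹ * g⁻¹) x) ≠ p := by
        rw [← mul_inv_rev]; exact hex s hs
      have hys : y (g * s) = x (g * s) := by
        simp [hy, tauP, muP, hex', restrictPat, shift]
      have := hval s hs
      rw [hys] at this
      simpa [restrictPat, shift] using this
  simp [tauP, muP, hy', restrictPat, shift]
end

section
/- Let p : S → A be a quasi-constant pattern with nonconstant term r ∈ S, r ≠ e, and let a := p(r) (so a ≠ p(e)). Then τ_p^a is idempotent if and only if r² ∈ S. -/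
variable {G A : Type*}

/-!
τ rewrites a cell to `a = p r` exactly where `p` occurs, and otherwise copies it, so τ is
idempotent iff `p` never occurs in an image `τ x`. If `r² ∈ S` and `p` occurred at `g` in `τ x`,
the cell `g r²` of `τ x` would carry `p(r²) = p(e) ≠ a`; hence `g r` was not rewritten, the cells
`g s` (`s ≠ r`) were not rewritten either, and `p` already occurred at `g` in `x`, forcing
`τ x (g) = a ≠ p(e)`. If `r² ∉ S`, the configuration equal to `p(e)` except for `a` at `r²` has
`p` at `r` only, and its image has `p` at `e`.
-/

def OccursAt [Mul G] (S : Finset G) (p : S → A) (x : G → A) (g : G) : Prop :=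
  ∀ s : S, x (g * s) = p s

section Rule

variable [Group G] [DecidableEq A] {S : Finset G} {p : S → A} {a : A} {he : (1 : G) ∈ S}
  {x : G → A} {g : G}

omit [DecidableEq A] in
theorem restrictPat_shift_inv_eq_iff : restrictPat S (shift g⁻¹ x) = p ↔ OccursAt S p x g := by
  simp only [funext_iff, restrictPat, shift, inv_inv, OccursAt]

theorem tauP_apply_of_occursAt (h : OccursAt S p x g) : tauP S p a he x g = a :=
  if_pos (restrictPat_shift_inv_eq_iff.2 h)

theorem tauP_apply_of_not_occursAt (h : ¬OccursAt S p x g) : tauP S p a he x g = x g :=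
  (if_neg (mt restrictPat_shift_inv_eq_iff.1 h)).trans (by simp [restrictPat, shift])

theorem tauP_apply_of_apply_eq (h : x g = a) : tauP S p a he x g = a := by
  by_cases hg : OccursAt S p x g
  · exact tauP_apply_of_occursAt hg
  · rw [tauP_apply_of_not_occursAt hg, h]

theorem tauP_apply_of_ne (h : tauP S p a he x g ≠ a) : tauP S p a he x g = x g :=
  tauP_apply_of_not_occursAt fun hg => h (tauP_apply_of_occursAt hg)

end Rule

section QuasiConstant

variable [Group G] {S : Finset G} {p : S → A} {he : (1 : G) ∈ S} {r : G}

theorem occursAt_iff_of_quasiConstant (hr : r ∈ S) (hq : ∀ s : S, (s : G) ≠ r → p s = p ⟨1, he⟩)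
    {x : G → A} {g : G} :
    OccursAt S p x g ↔ x (g * r) = p ⟨r, hr⟩ ∧ ∀ s : S, (s : G) ≠ r → x (g * s) = p ⟨1, he⟩ := by
  refine ⟨fun h => ⟨h ⟨r, hr⟩, fun s hs => (h s).trans (hq s hs)⟩, fun ⟨hxr, hxs⟩ s => ?_⟩
  by_cases hs : (s : G) = r
  · obtain rfl : s = ⟨r, hr⟩ := Subtype.ext hs
    exact hxr
  · rw [hxs s hs, hq s hs]

variable [DecidableEq A] {hr : r ∈ S}

theorem not_occursAt_tauP_of_quasiConstant (hre : r ≠ 1) (hrr : r * r ∈ S)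
    (hq : ∀ s : S, (s : G) ≠ r → p s = p ⟨1, he⟩) (hnc : p ⟨r, hr⟩ ≠ p ⟨1, he⟩)
    (x : G → A) (g : G) : ¬OccursAt S p (tauP S p (p ⟨r, hr⟩) he x) g := by
  set y := tauP S p (p ⟨r, hr⟩) he x
  intro hy
  obtain ⟨hyr, hys⟩ := (occursAt_iff_of_quasiConstant hr hq).1 hy
  have hyrr : y (g * (r * r)) = p ⟨1, he⟩ :=
    hys ⟨r * r, hrr⟩ fun h => hre (mul_eq_left.1 h)
  have hgr : ¬OccursAt S p x (g * r) := fun hgr => hnc <| by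
    rw [← hyrr, ← mul_assoc]
    exact (tauP_apply_of_apply_eq (hgr ⟨r, hr⟩)).symm
  have hxr : x (g * r) = p ⟨r, hr⟩ := (tauP_apply_of_not_occursAt hgr).symm.trans hyr
  have hx : OccursAt S p x g := by
    refine (occursAt_iff_of_quasiConstant hr hq).2 ⟨hxr, fun s hs => ?_⟩
    have hys_ne : y (g * s) ≠ p ⟨r, hr⟩ := by rw [hys s hs]; exact hnc.symm
    exact (tauP_apply_of_ne hys_ne).symm.trans (hys s hs)
  exact hnc ((tauP_apply_of_occursAt hx).symm.trans (by simpa using hys ⟨1, he⟩ hre.symm))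

theorem tauP_comp_tauP_ne_of_quasiConstant (hre : r ≠ 1) (hrr : r * r ∉ S)
    (hq : ∀ s : S, (s : G) ≠ r → p s = p ⟨1, he⟩) (hnc : p ⟨r, hr⟩ ≠ p ⟨1, he⟩) :
    tauP S p (p ⟨r, hr⟩) he ∘ tauP S p (p ⟨r, hr⟩) he ≠ tauP S p (p ⟨r, hr⟩) he := by
  classical
  intro hid
  set x := Function.update (fun _ => p ⟨1, he⟩) (r * r) (p ⟨r, hr⟩)
  have hx : ∀ h, h ≠ r * r → x h = p ⟨1, he⟩ := fun h hh => Function.update_of_ne hh _ _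
  have hxr : OccursAt S p x r := (occursAt_iff_of_quasiConstant hr hq).2
    ⟨Function.update_self _ _ _, fun s hs => hx _ fun h => hs (mul_left_cancel h)⟩
  have hys : ∀ s : S, (s : G) ≠ r → tauP S p (p ⟨r, hr⟩) he x s = p ⟨1, he⟩ := by
    intro s hs
    have hxs : ¬OccursAt S p x s := fun h =>
      hnc (((occursAt_iff_of_quasiConstant hr hq).1 h).1.symm.trans
        (hx _ fun h => hs (mul_right_cancel h)))
    exact (tauP_apply_of_not_occursAt hxs).trans (hx _ fun h => hrr (h ▸ s.2))
  have hy : OccursAt S p (tauP S p (p ⟨r, hr⟩) he x) 1 := by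
    refine (occursAt_iff_of_quasiConstant hr hq).2 ⟨?_, fun s hs => ?_⟩ <;> rw [one_mul]
    exacts [tauP_apply_of_occursAt hxr, hys s hs]
  exact hnc ((tauP_apply_of_occursAt hy).symm.trans
    ((congrFun (congrFun hid x) 1).trans (hys ⟨1, he⟩ hre.symm)))

end QuasiConstant

theorem quasiConstant_nonidentity_term_idempotent_iff_general [Group G] [DecidableEq A]
    (S : Finset G) (he : (1 : G) ∈ S)
    (p : S → A) (r : G) (hr : r ∈ S) (hre : r ≠ 1)
    (hq : ∀ s : S, (s : G) ≠ r → p s = p ⟨1, he⟩)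
    (hnc : p ⟨r, hr⟩ ≠ p ⟨1, he⟩) :
    tauP S p (p ⟨r, hr⟩) he ∘ tauP S p (p ⟨r, hr⟩) he = tauP S p (p ⟨r, hr⟩) he ↔
      r * r ∈ S := by
  constructor
  · intro hid
    by_contra hrr
    exact tauP_comp_tauP_ne_of_quasiConstant hre hrr hq hnc hid
  · intro hrr
    funext x g
    exact tauP_apply_of_not_occursAt (not_occursAt_tauP_of_quasiConstant hre hrr hq hnc x g)

theorem quasiConstant_nonidentity_term_idempotent_iff [Group G] [Fintype A] [DecidableEq A]
    (hA : 2 ≤ Fintype.card A) (S : Finset G) (he : (1 : G) ∈ S)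
    (p : S → A) (r : G) (hr : r ∈ S) (hre : r ≠ 1)
    (hq : ∀ s : S, (s : G) ≠ r → p s = p ⟨1, he⟩)
    (hnc : p ⟨r, hr⟩ ≠ p ⟨1, he⟩) :
    tauP S p (p ⟨r, hr⟩) he ∘ tauP S p (p ⟨r, hr⟩) he = tauP S p (p ⟨r, hr⟩) he ↔
      r * r ∈ S :=
  quasiConstant_nonidentity_term_idempotent_iff_general S he p r hr hre hq hnc
end

section
/- Let p : S → A be a quasi-constant pattern with nonconstant term e, and let a ∈ A be the common value p(s) = a for all s ∈ S \ {e} (so a ≠ p(e)). Then τ_p^a is idempotent if and only if S = S⁻¹. -/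
variable {G A : Type*}

theorem quasiConstant_identity_term_idempotent_iff [Group G] [Fintype A] [DecidableEq A]
    (hA : 2 ≤ Fintype.card A) (S : Finset G) (he : (1 : G) ∈ S) (hS : 2 ≤ S.card)
    (p : S → A) (a : A) (ha : a ≠ p ⟨1, he⟩)
    (hq : ∀ s : S, (s : G) ≠ 1 → p s = a) :
    tauP S p a he ∘ tauP S p a he = tauP S p a he ↔ ∀ s ∈ S, s⁻¹ ∈ S := by
  classical
  set b := p ⟨1, he⟩ with hbdef
  have hba : b ≠ a := fun h => ha h.symm
  have hpe : ∀ s : S, p s = if (s : G) = 1 then b else a := by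
    intro s
    by_cases h : (s : G) = 1
    · rw [if_pos h, hbdef]
      congr 1
      exact Subtype.ext h
    · rw [if_neg h, hq s h]
  have key : ∀ (x : G → A) (g : G),
      tauP S p a he x g =
        if (x g = b ∧ ∀ s ∈ S, s ≠ 1 → x (g * s) = a) then a else x g := by
    intro x g
    have hres : restrictPat S (shift g⁻¹ x) = fun s : S => x (g * s) := by
      funext s
      simp [restrictPat, shift]
    show muP S p a he (restrictPat S (shift g⁻¹ x)) = _
    rw [hres]
    unfold muP
    by_cases hm : (fun s : S => x (g * s)) = p
    · have hxg : x g = b := by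
        have := congrFun hm ⟨1, he⟩
        simpa [hbdef] using this
      have hall : ∀ s ∈ S, s ≠ 1 → x (g * s) = a := by
        intro s hs hs1
        have := congrFun hm ⟨s, hs⟩
        rw [hpe ⟨s, hs⟩] at this
        simpa [hs1] using this
      rw [if_pos hm, if_pos ⟨hxg, hall⟩]
    · have hc : ¬(x g = b ∧ ∀ s ∈ S, s ≠ 1 → x (g * s) = a) := by
        rintro ⟨h1, h2⟩
        apply hm
        funext s
        rw [hpe s]
        by_cases h : (s : G) = 1
        · rw [if_pos h, h, mul_one, h1]
        · rw [if_neg h, h2 s s.2 h]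
      rw [if_neg hm, if_neg hc]
      show x (g * 1) = x g
      rw [mul_one]
  constructor
  · intro hid s hs
    by_cases hs1 : s = 1
    · subst hs1; simpa using he
    by_contra hns
    set x : G → A := fun h => if h = 1 ∨ h = s then b else a with hx
    set y := tauP S p a he x with hy
    have hys : y s = a := by
      rw [hy, key]
      rw [if_pos]
      constructor
      · simp [hx]
      · intro t ht ht1
        have h1 : s * t ≠ 1 := by
          intro h
          exact hns (by rwa [eq_inv_of_mul_eq_one_right h] at ht)
        have h2 : s * t ≠ s := by
          intro h
          exact ht1 (by simpa using h)
        simp [hx, h1, h2]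
    have hy1 : y 1 = b := by
      rw [hy, key]
      rw [if_neg, hx]
      · simp
      · rintro ⟨-, h2⟩
        have := h2 s hs hs1
        rw [one_mul] at this
        simp [hx] at this
        exact hba this
    have hyt : ∀ t ∈ S, t ≠ 1 → t ≠ s → y t = a := by
      intro t ht ht1 hts
      rw [hy, key]
      rw [if_neg]
      · simp [hx, ht1, hts]
      · rintro ⟨h1, -⟩
        simp [hx, ht1, hts] at h1
        exact hba h1.symm
    have hyy : tauP S p a he y 1 = a := by
      rw [key]
      rw [if_pos]
      refine ⟨hy1, ?_⟩
      intro t ht ht1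
      rw [one_mul]
      by_cases hts : t = s
      · rw [hts]; exact hys
      · exact hyt t ht ht1 hts
    have := congrFun (congrFun hid x) 1
    simp only [Function.comp_apply] at this
    rw [← hy, hyy, hy1] at this
    exact hba this.symm
  · intro hsym
    funext x g
    simp only [Function.comp_apply]
    set y := tauP S p a he x with hy
    rw [key]
    rw [if_neg]
    rintro ⟨h1, h2⟩
    -- y g = b forces x not matching at g and x g = b
    have hyg := key x g
    rw [← hy] at hyg
    by_cases hm : x g = b ∧ ∀ s ∈ S, s ≠ 1 → x (g * s) = a
    · rw [if_pos hm] at hyg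
      exact hba (h1 ▸ hyg.symm ▸ rfl)
    · rw [if_neg hm] at hyg
      have hxg : x g = b := hyg ▸ h1
      push_neg at hm
      obtain ⟨s₀, hs₀S, hs₀1, hs₀⟩ := hm hxg
      have hya : y (g * s₀) = a := h2 s₀ hs₀S hs₀1
      have hyg2 := key x (g * s₀)
      rw [← hy] at hyg2
      by_cases hm2 : x (g * s₀) = b ∧ ∀ s ∈ S, s ≠ 1 → x (g * s₀ * s) = a
      · have hinv : s₀⁻¹ ∈ S := hsym s₀ hs₀S
        have hinv1 : s₀⁻¹ ≠ 1 := by simpa using hs₀1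
        have := hm2.2 s₀⁻¹ hinv hinv1
        rw [mul_inv_cancel_right] at this
        rw [hxg] at this
        exact hba this
      · rw [if_neg hm2] at hyg2
        exact hs₀ (hyg2 ▸ hya)
end

section
/- Let τ_p^a be an idempotent cellular automaton defined by a pattern p : S → A and a ∈ A \ {p(e)}. For b ∈ A, σ_b ≤ τ_p^a in the natural order if and only if p is not the constant pattern b^S (where b^S(s) = b for all s ∈ S). -/
variable {G A : Type*}

theorem const_le_tauP_iff [Group G] [Fintype A] [DecidableEq A]
    (hA : 2 ≤ Fintype.card A) (S : Finset G) (he : (1 : G) ∈ S)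
    (p : S → A) (a : A) (ha : a ≠ p ⟨1, he⟩)
    (hidem : tauP S p a he ∘ tauP S p a he = tauP S p a he) (b : A) :
    ((fun _ : G → A => fun _ : G => b) ∘ tauP S p a he =
        (fun _ : G → A => fun _ : G => b) ∧
      tauP S p a he ∘ (fun _ : G → A => fun _ : G => b) =
        (fun _ : G → A => fun _ : G => b)) ↔
      p ≠ fun _ : S => b := by
  have hkey : ∀ x : G → A, ∀ g : G,
      tauP S p a he (fun _ : G => b) g = if (fun _ : S => b) = p then a else b := by
    intro x g
    simp only [tauP, muP, restrictPat, shift]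
    rfl
  constructor
  · rintro ⟨_, h2⟩ hpb
    have := congrFun (congrFun h2 (fun _ => b)) 1
    simp only [Function.comp_apply] at this
    rw [hkey (fun _ => b) 1] at this
    rw [if_pos hpb.symm] at this
    -- this : a = b
    apply ha
    rw [this, hpb]
  · intro hpb
    refine ⟨rfl, ?_⟩
    funext x g
    simp only [Function.comp_apply]
    rw [hkey x g, if_neg (fun h => hpb h.symm)]
end

section
/- Let τ_p^a and τ_q^b be idempotent cellular automata defined by patterns p : S₁ → A, q : S₂ → A and symbols a ≠ p(e), b ≠ q(e). Then τ_p^a ≤ τ_q^b in the natural order if and only if X_p ⊆ X_q and ker(τ_q^b) ⊆ ker(τ_p^a). -/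
variable {G A : Type*}

lemma tau_fixed_of_mem [Group G] [DecidableEq A] (S : Finset G) (p : S → A) (a : A)
    (he : (1 : G) ∈ S) {x : G → A} (hx : x ∈ Xp S p) : tauP S p a he x = x := by
  funext g
  simp only [tauP, muP, if_neg (hx g)]
  simp [restrictPat, shift]

lemma mem_of_tau_fixed [Group G] [DecidableEq A] (S : Finset G) (p : S → A) (a : A)
    (he : (1 : G) ∈ S) (ha : a ≠ p ⟨1, he⟩) {x : G → A} (hx : tauP S p a he x = x) :
    x ∈ Xp S p := by
  intro g hg
  have h1 := congrFun hx g
  simp only [tauP, muP, if_pos hg] at h1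
  have h2 : restrictPat S (shift g⁻¹ x) ⟨1, he⟩ = p ⟨1, he⟩ := by rw [hg]
  simp only [restrictPat, shift, inv_inv, mul_one] at h2
  exact ha (h1.trans h2)

theorem natural_order_characterization [Group G] [Fintype A] [DecidableEq A]
    (hA : 2 ≤ Fintype.card A)
    (S₁ S₂ : Finset G) (he₁ : (1 : G) ∈ S₁) (he₂ : (1 : G) ∈ S₂)
    (p : S₁ → A) (q : S₂ → A) (a b : A)
    (ha : a ≠ p ⟨1, he₁⟩) (hb : b ≠ q ⟨1, he₂⟩)
    (hip : tauP S₁ p a he₁ ∘ tauP S₁ p a he₁ = tauP S₁ p a he₁)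
    (hiq : tauP S₂ q b he₂ ∘ tauP S₂ q b he₂ = tauP S₂ q b he₂) :
    (tauP S₁ p a he₁ ∘ tauP S₂ q b he₂ = tauP S₁ p a he₁ ∧
      tauP S₂ q b he₂ ∘ tauP S₁ p a he₁ = tauP S₁ p a he₁) ↔
      (Xp S₁ p ⊆ Xp S₂ q ∧
        {pr : (G → A) × (G → A) | tauP S₂ q b he₂ pr.1 = tauP S₂ q b he₂ pr.2} ⊆
          {pr : (G → A) × (G → A) | tauP S₁ p a he₁ pr.1 = tauP S₁ p a he₁ pr.2}) := by
  set τ := tauP S₁ p a he₁ with hτ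
  set σ := tauP S₂ q b he₂ with hσ
  constructor
  · rintro ⟨h1, h2⟩
    constructor
    · intro x hx
      have hfix : τ x = x := tau_fixed_of_mem S₁ p a he₁ hx
      have : σ x = x := by
        have := congrFun h2 x
        simp only [Function.comp_apply, hfix] at this
        exact this
      exact mem_of_tau_fixed S₂ q b he₂ hb this
    · rintro ⟨x, y⟩ hxy
      simp only [Set.mem_setOf_eq] at hxy ⊢
      calc τ x = τ (σ x) := (congrFun h1 x).symm
        _ = τ (σ y) := by rw [hxy]
        _ = τ y := congrFun h1 y
  · rintro ⟨hX, hK⟩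
    constructor
    · funext x
      simp only [Function.comp_apply]
      have hσσ : σ (σ x) = σ x := congrFun hiq x
      have hm : ((σ x, x) : (G → A) × (G → A)) ∈
          {pr : (G → A) × (G → A) | σ pr.1 = σ pr.2} := hσσ
      have h3 := hK hm
      simp only [Set.mem_setOf_eq] at h3
      exact h3
    · funext x
      simp only [Function.comp_apply]
      have hτx : τ x ∈ Xp S₁ p :=
        mem_of_tau_fixed S₁ p a he₁ ha (congrFun hip x)
      exact tau_fixed_of_mem S₂ q b he₂ (hX hτx)
end

section
/- Let τ_p^a and τ_q^b be idempotent cellular automata defined by patterns p : S₁ → A, q : S₂ → A with a ≠ p(e), b ≠ q(e). If q(e) ≠ a and τ_p^a ≤ τ_q^b in the natural order, then a = b, S₁ ⊆ S₂, and q restricted to S₁ equals p. -/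
variable {G A : Type*}

theorem order_implies_pattern_extension [Group G] [Fintype A] [DecidableEq A]
    (hA : 2 ≤ Fintype.card A)
    (S₁ S₂ : Finset G) (he₁ : (1 : G) ∈ S₁) (he₂ : (1 : G) ∈ S₂)
    (p : S₁ → A) (q : S₂ → A) (a b : A)
    (ha : a ≠ p ⟨1, he₁⟩) (hb : b ≠ q ⟨1, he₂⟩)
    (hip : tauP S₁ p a he₁ ∘ tauP S₁ p a he₁ = tauP S₁ p a he₁)
    (hiq : tauP S₂ q b he₂ ∘ tauP S₂ q b he₂ = tauP S₂ q b he₂)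
    (hqa : q ⟨1, he₂⟩ ≠ a)
    (hle : tauP S₁ p a he₁ ∘ tauP S₂ q b he₂ = tauP S₁ p a he₁ ∧
      tauP S₂ q b he₂ ∘ tauP S₁ p a he₁ = tauP S₁ p a he₁) :
    a = b ∧ ∀ (s : G) (hs : s ∈ S₁), ∃ hs' : s ∈ S₂, q ⟨s, hs'⟩ = p ⟨s, hs⟩ := by
  classical
  obtain ⟨hle1, _⟩ := hle
  have shift1 : ∀ (f : G → A), shift (1:G) f = f := by
    intro f; funext h; simp [shift]
  have tP : ∀ f : G → A, tauP S₁ p a he₁ f 1 =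
      if restrictPat S₁ f = p then a else f 1 := by
    intro f; simp [tauP, muP, inv_one, shift1, restrictPat]
  have tQ : ∀ f : G → A, tauP S₂ q b he₂ f 1 =
      if restrictPat S₂ f = q then b else f 1 := by
    intro f; simp [tauP, muP, inv_one, shift1, restrictPat]
  set x : A → G → A := fun c g => if h : g ∈ S₂ then q ⟨g, h⟩ else c with hxdef
  have hxq : ∀ c, restrictPat S₂ (x c) = q := by
    intro c; funext s
    simp [restrictPat, hxdef, s.2]
  have hx1 : ∀ c, x c 1 = q ⟨1, he₂⟩ := by
    intro c; simp [hxdef, he₂]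
  have hτq1 : ∀ c, tauP S₂ q b he₂ (x c) 1 = b := by
    intro c; rw [tQ, if_pos (hxq c)]
  have key : ∀ c, restrictPat S₁ (x c) = p := by
    intro c
    by_contra h
    have heq := congrFun (congrFun hle1 (x c)) 1
    simp only [Function.comp_apply] at heq
    rw [tP, tP, if_neg h, hx1 c] at heq
    by_cases hm : restrictPat S₁ (tauP S₂ q b he₂ (x c)) = p
    · rw [if_pos hm] at heq
      exact hqa heq.symm
    · rw [if_neg hm, hτq1 c] at heq
      exact hb heq
  have hp1 : p ⟨1, he₁⟩ = q ⟨1, he₂⟩ := by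
    have h := congrFun (key (q ⟨1, he₂⟩)) ⟨1, he₁⟩
    rw [← h]
    simp [restrictPat, hxdef, he₂]
  have hab : a = b := by
    obtain ⟨c⟩ := Fintype.card_pos_iff.mp (by omega : 0 < Fintype.card A)
    have heq := congrFun (congrFun hle1 (x c)) 1
    simp only [Function.comp_apply] at heq
    rw [tP, tP, if_pos (key c)] at heq
    have hm : restrictPat S₁ (tauP S₂ q b he₂ (x c)) ≠ p := by
      intro hm
      have h := congrFun hm ⟨1, he₁⟩
      rw [hp1] at h
      apply hb
      rw [← h]
      have : restrictPat S₁ (tauP S₂ q b he₂ (x c)) ⟨1, he₁⟩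
          = tauP S₂ q b he₂ (x c) 1 := rfl
      rw [this, hτq1 c]
    rw [if_neg hm, hτq1 c] at heq
    exact heq.symm
  refine ⟨hab, fun s hs => ?_⟩
  by_cases hs' : s ∈ S₂
  · refine ⟨hs', ?_⟩
    obtain ⟨c⟩ := Fintype.card_pos_iff.mp (by omega : 0 < Fintype.card A)
    have h := congrFun (key c) ⟨s, hs⟩
    rw [← h]
    simp [restrictPat, hxdef, hs']
  · exfalso
    obtain ⟨c₁, c₂, hc⟩ := Fintype.one_lt_card_iff.mp (by omega : 1 < Fintype.card A)
    have h1 := congrFun (key c₁) ⟨s, hs⟩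
    have h2 := congrFun (key c₂) ⟨s, hs⟩
    simp only [restrictPat, hxdef, dif_neg hs'] at h1 h2
    exact hc (h1.trans h2.symm)
end
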